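/- Let G be a graph of odd order n whose vertex set is partitioned as {x} ∪ V(H₁) ∪ V(H₂), where x is a cut vertex, H₁ and H₂ are the two components of G − x, and |H₁| = |H₂| = (n−1)/2. If the bipartite-hole-number satisfies α̃(G) = (n+1)/2, then x is adjacent to every other vertex of G and both H₁ and H₂ are complete graphs; consequently G = K₁ ∨ 2K_{(n−1)/2}. -/

import Mathlib

open scoped Classical

/-- An `(s,t)`-bipartite-hole: disjoint vertex sets of sizes `s` and `t` with no edge between. -/
def HasBipHole {V : Type*} (G : SimpleGraph V) (s t : ℕ) : Prop :=
  ∃ S T : Finset V, Disjoint S T ∧ S.card = s ∧ T.card = t ∧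
    ∀ a ∈ S, ∀ b ∈ T, ¬ G.Adj a b

/-- The bipartite-hole-number: least `k` admitting positive `s,t` with `s+t = k+1` and
no `(s,t)`-bipartite-hole. -/
noncomputable def bhn {V : Type*} (G : SimpleGraph V) : ℕ :=
  sInf {k | ∃ s t : ℕ, 0 < s ∧ 0 < t ∧ s + t = k + 1 ∧ ¬ HasBipHole G s t}

/-- The join `G ∨ K₁`: one new vertex adjacent to everything. -/
def joinK1 {V : Type*} (G : SimpleGraph V) : SimpleGraph (Option V) where
  Adj a b := match a, b with
    | some a, some b => G.Adj a b
    | some _, none => True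
    | none, some _ => True
    | none, none => False
  symm := by
    constructor
    rintro (_ | a) (_ | b) h
    · exact h.elim
    · trivial
    · trivial
    · exact G.adj_symm h
  loopless := by
    constructor
    rintro (_ | a) h
    · exact h
    · exact G.loopless.irrefl a h

/-- Minimum degree sum over non-adjacent pairs of distinct vertices. -/
noncomputable def sigma2 {V : Type*} [Fintype V] (G : SimpleGraph V) : ℕ :=
  sInf {m | ∃ x y : V, x ≠ y ∧ ¬ G.Adj x y ∧ G.degree x + G.degree y = m}

/-- A graph is traceable if it has a Hamilton path. -/
def IsTraceable {V : Type*} (G : SimpleGraph V) : Prop :=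
  ∃ (a b : V) (p : G.Walk a b), p.IsHamiltonian

/-- `G` is 2-connected: at least 3 vertices and deleting any vertex leaves it connected. -/
def TwoConnected {V : Type*} [Fintype V] (G : SimpleGraph V) : Prop :=
  3 ≤ Fintype.card V ∧ ∀ v : V, (SimpleGraph.induce ({v}ᶜ : Set V) G).Connected

/-!
The two sides `A`, `B` of the cut form a `(k,k)`-bipartite-hole, where `n = 2k+1`, hence so do
all smaller pairs. As `α̃(G) = k+1`, some pair `(s,t)` with `s + t = k+2` is not a hole, and it
must be `(k+1,1)` or `(1,k+1)`: every vertex `v` has a neighbour in every `(k+1)`-set avoiding `v`.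
Since `v` has no neighbour on the side not containing it, taking that set to be `u` together with
that side forces `u ~ v`.
-/

section BipartiteHole

variable {V : Type*} {G : SimpleGraph V}

theorem HasBipHole.symm {s t : ℕ} (h : HasBipHole G s t) : HasBipHole G t s := by
  obtain ⟨S, T, hST, hS, hT, hadj⟩ := h
  exact ⟨T, S, hST.symm, hT, hS, fun b hb a ha hba => hadj a ha b hb hba.symm⟩

theorem HasBipHole.mono {s t s' t' : ℕ} (h : HasBipHole G s t) (hs : s' ≤ s) (ht : t' ≤ t) :
    HasBipHole G s' t' := by
  obtain ⟨S, T, hST, rfl, rfl, hadj⟩ := h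
  obtain ⟨S', hS'S, hS'⟩ := Finset.exists_subset_card_eq hs
  obtain ⟨T', hT'T, hT'⟩ := Finset.exists_subset_card_eq ht
  exact ⟨S', T', hST.mono hS'S hT'T, hS', hT', fun a ha b hb => hadj a (hS'S ha) b (hT'T hb)⟩

theorem exists_not_hasBipHole_of_bhn_ne_zero (h : bhn G ≠ 0) :
    ∃ s t : ℕ, 0 < s ∧ 0 < t ∧ s + t = bhn G + 1 ∧ ¬ HasBipHole G s t :=
  Nat.sInf_mem (Nat.nonempty_of_pos_sInf (Nat.pos_of_ne_zero h))

theorem not_hasBipHole_succ_one_of_bhn_eq_succ {k : ℕ} (hk : HasBipHole G k k)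
    (hbhn : bhn G = k + 1) : ¬ HasBipHole G (k + 1) 1 := by
  obtain ⟨s, t, hs, ht, hst, hno⟩ := exists_not_hasBipHole_of_bhn_ne_zero (G := G) (by omega)
  rw [hbhn] at hst
  intro hhole
  rcases Nat.lt_or_ge k s with hks | hsk
  · exact hno (hhole.mono (by omega) (by omega))
  rcases Nat.lt_or_ge k t with hkt | htk
  · exact hno (hhole.symm.mono (by omega) (by omega))
  · exact hno (hk.mono hsk htk)

theorem adj_of_not_hasBipHole {C : Finset V} {u v : V} (h : ¬ HasBipHole G (C.card + 1) 1)
    (hu : u ∉ C) (hv : v ∉ C) (huv : u ≠ v) (hC : ∀ c ∈ C, ¬ G.Adj c v) : G.Adj u v := by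
  by_contra huv'
  refine h ⟨insert u C, {v}, ?_, Finset.card_insert_of_notMem hu, Finset.card_singleton v, ?_⟩
  · simpa [huv.symm] using hv
  · simp only [Finset.mem_insert, Finset.mem_singleton]
    rintro a (rfl | ha) b rfl
    exacts [huv', hC a ha]

end BipartiteHole

theorem adj_iff_of_cone_over_two_cliques {V : Type*} {G : SimpleGraph V} {x : V}
    {A B : Finset V} (hmem : ∀ y, y ≠ x → y ∈ A ∨ y ∈ B) (hAB : ∀ a ∈ A, ∀ b ∈ B, ¬ G.Adj a b)
    (hx : ∀ y, y ≠ x → G.Adj x y) (hA : ∀ u ∈ A, ∀ v ∈ A, u ≠ v → G.Adj u v)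
    (hB : ∀ u ∈ B, ∀ v ∈ B, u ≠ v → G.Adj u v) (u v : V) :
    G.Adj u v ↔ u ≠ v ∧ (u = x ∨ v = x ∨ (u ∈ A ∧ v ∈ A) ∨ (u ∈ B ∧ v ∈ B)) := by
  constructor
  · intro huv
    refine ⟨huv.ne, ?_⟩
    by_cases hu : u = x
    · exact Or.inl hu
    by_cases hv : v = x
    · exact Or.inr (Or.inl hv)
    rcases hmem u hu with huA | huB <;> rcases hmem v hv with hvA | hvB
    · exact Or.inr (Or.inr (Or.inl ⟨huA, hvA⟩))
    · exact absurd huv (hAB u huA v hvB)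
    · exact absurd huv.symm (hAB v hvA u huB)
    · exact Or.inr (Or.inr (Or.inr ⟨huB, hvB⟩))
  · rintro ⟨huv, rfl | rfl | ⟨huA, hvA⟩ | ⟨huB, hvB⟩⟩
    exacts [hx v huv.symm, (hx u huv).symm, hA u huA v hvA huv, hB u huB v hvB huv]

theorem stmt12_general {V : Type*} [Fintype V] (G : SimpleGraph V)
    (hodd : Odd (Fintype.card V))
    (x : V) (A B : Finset V)
    (hdisj : Disjoint A B) (hxA : x ∉ A) (hxB : x ∉ B)
    (hcover : A ∪ B = Finset.univ \ {x})
    (hA : A.card = (Fintype.card V - 1) / 2) (hB : B.card = (Fintype.card V - 1) / 2)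
    (hAB : ∀ a ∈ A, ∀ b ∈ B, ¬ G.Adj a b)
    (hbhn : bhn G = (Fintype.card V + 1) / 2) :
    (∀ y : V, y ≠ x → G.Adj x y) ∧
    (∀ u ∈ A, ∀ v ∈ A, u ≠ v → G.Adj u v) ∧
    (∀ u ∈ B, ∀ v ∈ B, u ≠ v → G.Adj u v) ∧
    (∀ u v : V, G.Adj u v ↔
      u ≠ v ∧ (u = x ∨ v = x ∨ (u ∈ A ∧ v ∈ A) ∨ (u ∈ B ∧ v ∈ B))) := by
  obtain ⟨k, hk⟩ := hodd
  have hAk : A.card = k := by omega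
  have hBk : B.card = k := by omega
  have hno : ¬ HasBipHole G (k + 1) 1 :=
    not_hasBipHole_succ_one_of_bhn_eq_succ ⟨A, B, hdisj, hAk, hBk, hAB⟩ (by omega)
  have hnoA : ¬ HasBipHole G (A.card + 1) 1 := hAk ▸ hno
  have hnoB : ¬ HasBipHole G (B.card + 1) 1 := hBk ▸ hno
  have hmem : ∀ y, y ≠ x → y ∈ A ∨ y ∈ B := fun y hy => by
    simpa [← Finset.mem_union, hcover] using hy
  have hx : ∀ y, y ≠ x → G.Adj x y := fun y hy => (hmem y hy).elim
    (fun hyA => adj_of_not_hasBipHole hnoB hxB (Finset.disjoint_left.1 hdisj hyA) hy.symm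
      fun b hb hby => hAB y hyA b hb hby.symm)
    (fun hyB => adj_of_not_hasBipHole hnoA hxA (Finset.disjoint_right.1 hdisj hyB) hy.symm
      fun a ha => hAB a ha y hyB)
  have hAcl : ∀ u ∈ A, ∀ v ∈ A, u ≠ v → G.Adj u v := fun u hu v hv huv =>
    adj_of_not_hasBipHole hnoB (Finset.disjoint_left.1 hdisj hu) (Finset.disjoint_left.1 hdisj hv)
      huv fun b hb hbv => hAB v hv b hb hbv.symm
  have hBcl : ∀ u ∈ B, ∀ v ∈ B, u ≠ v → G.Adj u v := fun u hu v hv huv =>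
    adj_of_not_hasBipHole hnoA (Finset.disjoint_right.1 hdisj hu)
      (Finset.disjoint_right.1 hdisj hv) huv fun a ha => hAB a ha v hv
  exact ⟨hx, hAcl, hBcl, adj_iff_of_cone_over_two_cliques hmem hAB hx hAcl hBcl⟩

theorem stmt12 {V : Type*} [Fintype V] (G : SimpleGraph V)
    (hodd : Odd (Fintype.card V))
    (x : V) (A B : Finset V)
    (hdisj : Disjoint A B) (hxA : x ∉ A) (hxB : x ∉ B)
    (hcover : A ∪ B = Finset.univ \ {x})
    (hA : A.card = (Fintype.card V - 1) / 2) (hB : B.card = (Fintype.card V - 1) / 2)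
    (hAB : ∀ a ∈ A, ∀ b ∈ B, ¬ G.Adj a b)
    (hAconn : (SimpleGraph.induce (↑A : Set V) G).Connected)
    (hBconn : (SimpleGraph.induce (↑B : Set V) G).Connected)
    (hbhn : bhn G = (Fintype.card V + 1) / 2) :
    (∀ y : V, y ≠ x → G.Adj x y) ∧
    (∀ u ∈ A, ∀ v ∈ A, u ≠ v → G.Adj u v) ∧
    (∀ u ∈ B, ∀ v ∈ B, u ≠ v → G.Adj u v) ∧
    (∀ u v : V, G.Adj u v ↔
      u ≠ v ∧ (u = x ∨ v = x ∨ (u ∈ A ∧ v ∈ A) ∨ (u ∈ B ∧ v ∈ B))) :=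
  stmt12_general G hodd x A B hdisj hxA hxB hcover hA hB hAB hbhn
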